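/- arXiv:2204.03419 — 4 statements merged into one kernel-verified Lean document; each statement's English description precedes it below -/
import Mathlib

section
/- Let s > ε > 0. There exists C > 0 such that for every N, every Wigner matrix H of dimension N, every φ : ℝ → ℝ with ‖φ‖_{H^{1/2+s}} < ∞, and every integer M ≥ 10⁴: Var(tr ψ_M(H)) ≤ C N² 2^{M(ε−2s)} ‖φ‖²_{H^{1/2+s}}, where ψ_M = Σ_{k ≥ M} φ_k is the tail of the Littlewood–Paley decomposition of φ. -/
open MeasureTheory ProbabilityTheory Real Filter Topology

noncomputable section

namespace RMT

variable {Ω : Type} [MeasurableSpace Ω]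

/-- The `k`-th moment `E[X^k]` of a real random variable. -/
def mom (μ : Measure Ω) (X : Ω → ℝ) (k : ℕ) : ℝ := ∫ ω, (X ω) ^ k ∂μ

/-- The cumulants of order `0,…,4` of a real random variable (with junk value `0`
beyond order `4`). -/
def cum (μ : Measure Ω) (X : Ω → ℝ) : ℕ → ℝ
  | 0 => 0
  | 1 => mom μ X 1
  | 2 => mom μ X 2 - mom μ X 1 ^ 2
  | 3 => mom μ X 3 - 3 * mom μ X 2 * mom μ X 1 + 2 * mom μ X 1 ^ 3
  | 4 => mom μ X 4 - 4 * mom μ X 3 * mom μ X 1 - 3 * mom μ X 2 ^ 2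
      + 12 * mom μ X 2 * mom μ X 1 ^ 2 - 6 * mom μ X 1 ^ 4
  | _ => 0

/-- The variance `Var(X) = E[X²] − (E[X])²`. -/
def varRV (μ : Measure Ω) (X : Ω → ℝ) : ℝ := (∫ ω, X ω ^ 2 ∂μ) - (∫ ω, X ω ∂μ) ^ 2

/-- The covariance `Cov(X,Y) = E[XY] − E[X]E[Y]`. -/
def covRV (μ : Measure Ω) (X Y : Ω → ℝ) : ℝ :=
  (∫ ω, X ω * Y ω ∂μ) - (∫ ω, X ω ∂μ) * (∫ ω, Y ω ∂μ)

/-- Spectral trace `tr φ(A) = ∑ i φ(λ_i)` of a real symmetric matrix (junk value `0` if `A`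
is not symmetric). -/
def specTr {N : ℕ} (φ : ℝ → ℝ) (A : Matrix (Fin N) (Fin N) ℝ) : ℝ :=
  if h : A.IsHermitian then ∑ i, φ (h.eigenvalues i) else 0

/-- Spectral trace `tr φ(A)` of a complex Hermitian matrix. -/
def specTrC {N : ℕ} (φ : ℝ → ℝ) (A : Matrix (Fin N) (Fin N) ℂ) : ℝ :=
  if h : A.IsHermitian then ∑ i, φ (h.eigenvalues i) else 0

/-- Empirical Stieltjes transform `m_N(z) = N⁻¹ ∑ i (λ_i − z)⁻¹` of a real symmetric matrix. -/
def stieltjes {N : ℕ} (A : Matrix (Fin N) (Fin N) ℝ) (z : ℂ) : ℂ :=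
  if h : A.IsHermitian then (N : ℂ)⁻¹ * ∑ i, (((h.eigenvalues i : ℝ) : ℂ) - z)⁻¹ else 0

/-- Empirical Stieltjes transform of a complex Hermitian matrix. -/
def stieltjesC {N : ℕ} (A : Matrix (Fin N) (Fin N) ℂ) (z : ℂ) : ℂ :=
  if h : A.IsHermitian then (N : ℂ)⁻¹ * ∑ i, (((h.eigenvalues i : ℝ) : ℂ) - z)⁻¹ else 0

/-- The eigenvalues of a real symmetric matrix, sorted in increasing order. -/
def eigSorted {N : ℕ} (A : Matrix (Fin N) (Fin N) ℝ) : Fin N → ℝ :=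
  if h : A.IsHermitian then h.eigenvalues ∘ Tuple.sort h.eigenvalues else fun _ => 0

/-- A (real symmetric) Wigner matrix with moment constants `Cmom`. -/
structure IsWignerMatrix (μ : Measure Ω) (Cmom : ℕ → ℝ) (N : ℕ)
    (H : Ω → Matrix (Fin N) (Fin N) ℝ) : Prop where
  prob : IsProbabilityMeasure μ
  meas : ∀ i j : Fin N, Measurable fun ω => H ω i j
  symm : ∀ ω, (H ω).IsSymm
  indep : iIndepFun
    (fun (p : {p : Fin N × Fin N // p.1 ≤ p.2}) ω => H ω p.val.1 p.val.2) μ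
  centered : ∀ i j : Fin N, ∫ ω, H ω i j ∂μ = 0
  variance : ∀ i j : Fin N, ∫ ω, (H ω i j) ^ 2 ∂μ = (1 + if i = j then 1 else 0) / N
  offdiag_id : ∀ i j k l : Fin N, i ≠ j → k ≠ l →
    Measure.map (fun ω => H ω i j) μ = Measure.map (fun ω => H ω k l) μ
  diag_id : ∀ i j : Fin N,
    Measure.map (fun ω => H ω i i) μ = Measure.map (fun ω => H ω j j) μ
  cumulant_rel : ∀ i j : Fin N, i ≠ j → ∀ k : ℕ, k ≤ 4 →
    cum μ (fun ω => H ω i i) k = (2 : ℝ) ^ (1 - (k : ℝ)) * cum μ (fun ω => H ω i j) k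
  moment_bound : ∀ k : ℕ, 0 < k → ∀ i j : Fin N,
    ∫ ω, |H ω i j| ^ k ∂μ ≤ Cmom k / (N : ℝ) ^ ((k : ℝ) / 2)

/-- A Wigner-smooth probability density. -/
structure IsWignerSmoothDensity (h : ℝ → ℝ) : Prop where
  pos : ∀ x, 0 < h x
  smooth : ContDiff ℝ (⊤ : ℕ∞) h
  total_mass : ∫ x, h x = 1
  gauss_tail : ∃ δ : ℝ, 0 < δ ∧ Integrable fun x => Real.exp (δ * x ^ 2) * h x
  log_deriv : ∀ k : ℕ, ∃ C : ℝ, 0 < C ∧ ∀ x : ℝ,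
    |iteratedDeriv k (fun y => Real.log (h y)) x| ≤ C * (1 + |x|) ^ C

/-- A smooth Wigner matrix: `√N H_12` has density `h_o` and `√(N/2) H_11` has density `h_d`. -/
structure IsSmoothWignerMatrix (μ : Measure Ω) (h_o h_d : ℝ → ℝ) (Cmom : ℕ → ℝ) (N : ℕ)
    (H : Ω → Matrix (Fin N) (Fin N) ℝ) : Prop where
  wigner : IsWignerMatrix μ Cmom N H
  smooth_o : IsWignerSmoothDensity h_o
  smooth_d : IsWignerSmoothDensity h_d
  offdiag_density : ∀ i j : Fin N, i ≠ j →
    Measure.map (fun ω => Real.sqrt N * H ω i j) μ =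
      volume.withDensity fun x => ENNReal.ofReal (h_o x)
  diag_density : ∀ i : Fin N,
    Measure.map (fun ω => Real.sqrt ((N : ℝ) / 2) * H ω i i) μ =
      volume.withDensity fun x => ENNReal.ofReal (h_d x)

/-- A GOE matrix. -/
structure IsGOE (μ : Measure Ω) (N : ℕ) (G : Ω → Matrix (Fin N) (Fin N) ℝ) : Prop where
  prob : IsProbabilityMeasure μ
  meas : ∀ i j : Fin N, Measurable fun ω => G ω i j
  symm : ∀ ω, (G ω).IsSymm
  indep : iIndepFun
    (fun (p : {p : Fin N × Fin N // p.1 ≤ p.2}) ω => G ω p.val.1 p.val.2) μ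
  gauss : ∀ i j : Fin N, i ≤ j →
    Measure.map (fun ω => G ω i j) μ =
      gaussianReal 0 (Real.toNNReal ((1 + if i = j then 1 else 0) / N))

/-- A GUE matrix. -/
structure IsGUE (μ : Measure Ω) (N : ℕ) (G : Ω → Matrix (Fin N) (Fin N) ℂ) : Prop where
  prob : IsProbabilityMeasure μ
  meas : ∀ i j : Fin N, Measurable fun ω => G ω i j
  herm : ∀ ω, (G ω).IsHermitian
  indep : iIndepFun
    (fun (q : {p : Fin N × Fin N // p.1 ≤ p.2} × Bool) ω =>
      if q.2 then (G ω q.1.val.1 q.1.val.2).re else (G ω q.1.val.1 q.1.val.2).im) μ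
  diag_re : ∀ i : Fin N,
    Measure.map (fun ω => (G ω i i).re) μ = gaussianReal 0 (Real.toNNReal (1 / N))
  offdiag_re : ∀ i j : Fin N, i < j →
    Measure.map (fun ω => (G ω i j).re) μ = gaussianReal 0 (Real.toNNReal (1 / (2 * N)))
  offdiag_im : ∀ i j : Fin N, i < j →
    Measure.map (fun ω => (G ω i j).im) μ = gaussianReal 0 (Real.toNNReal (1 / (2 * N)))

/-- The Gaussian-divisible ensemble `e^{-T/2} W + √(1-e^{-T}) G`. -/
def gaussDivisible {N : ℕ} (T : ℝ) (W G : Ω → Matrix (Fin N) (Fin N) ℝ) (ω : Ω) :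
    Matrix (Fin N) (Fin N) ℝ :=
  Real.exp (-T / 2) • W ω + Real.sqrt (1 - Real.exp (-T)) • G ω

/-- The Fourier transform `φ̂(ξ) = ∫ e^{iξx} φ(x) dx`. -/
def fourierT (φ : ℝ → ℝ) (ξ : ℝ) : ℂ :=
  ∫ x : ℝ, Complex.exp (Complex.I * (ξ : ℂ) * (x : ℂ)) * (φ x : ℂ)

/-- The integrand of the squared inhomogeneous Sobolev norm. -/
def sobolevWeight (s : ℝ) (φ : ℝ → ℝ) (ξ : ℝ) : ℝ :=
  ‖fourierT φ ξ‖ ^ 2 * (1 + |ξ| ^ (2 * s))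

/-- The squared inhomogeneous Sobolev norm `‖φ‖²_{H^s} = ∫ |φ̂(ξ)|²(1+|ξ|^{2s}) dξ`. -/
def sobolevSq (s : ℝ) (φ : ℝ → ℝ) : ℝ := ∫ ξ : ℝ, sobolevWeight s φ ξ

/-- Finiteness of the `H^s` norm. -/
def HsFinite (s : ℝ) (φ : ℝ → ℝ) : Prop := Integrable (sobolevWeight s φ)

/-- A fixed pair of Littlewood–Paley functions. -/
structure IsLittlewoodPaleyPair (h w : ℝ → ℝ) : Prop where
  h_int : Integrable h
  w_int : Integrable w
  h_smooth : ContDiff ℝ (⊤ : ℕ∞) h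
  w_smooth : ContDiff ℝ (⊤ : ℕ∞) w
  hhat_real : ∀ ξ : ℝ, (fourierT h ξ).im = 0
  what_real : ∀ ξ : ℝ, (fourierT w ξ).im = 0
  hhat_even : ∀ ξ : ℝ, fourierT h (-ξ) = fourierT h ξ
  what_even : ∀ ξ : ℝ, fourierT w (-ξ) = fourierT w ξ
  hhat_smooth : ContDiff ℝ (⊤ : ℕ∞) fun ξ : ℝ => (fourierT h ξ).re
  what_smooth : ContDiff ℝ (⊤ : ℕ∞) fun ξ : ℝ => (fourierT w ξ).re
  hhat_nonneg : ∀ ξ : ℝ, 0 ≤ (fourierT h ξ).re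
  hhat_le_one : ∀ ξ : ℝ, (fourierT h ξ).re ≤ 1
  what_nonneg : ∀ ξ : ℝ, 0 ≤ (fourierT w ξ).re
  what_le_one : ∀ ξ : ℝ, (fourierT w ξ).re ≤ 1
  hhat_supp : ∀ ξ : ℝ, 4 / 3 < |ξ| → fourierT h ξ = 0
  what_supp : ∀ ξ : ℝ, |ξ| < 3 / 4 ∨ 8 / 3 < |ξ| → fourierT w ξ = 0
  partition : ∀ ξ : ℝ,
    (fourierT h ξ).re + ∑' k : ℕ, (fourierT w ((2 : ℝ) ^ (-(k : ℝ)) * ξ)).re = 1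

/-- The `k`-th Littlewood–Paley piece `φ_k = 2^k w(2^k ·) ⋆ φ` (for `k ≥ 0`). -/
def LPpiece (w φ : ℝ → ℝ) (k : ℕ) (x : ℝ) : ℝ :=
  ∫ y : ℝ, (2 : ℝ) ^ k * w ((2 : ℝ) ^ k * (x - y)) * φ y

/-- The tail `ψ_M = ∑_{k ≥ M} φ_k` of the Littlewood–Paley decomposition. -/
def LPtail (w φ : ℝ → ℝ) (M : ℕ) (x : ℝ) : ℝ :=
  ∑' k : ℕ, if M ≤ k then LPpiece w φ k x else 0

/-- The squared `L²` norm. -/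
def L2sq (f : ℝ → ℝ) : ℝ := ∫ x : ℝ, f x ^ 2

/-- The weighted `L¹` norm `‖f‖_{1,w} = ∫ |f(x)| |4−x²|^{−1/2} dx`. -/
def wNorm (f : ℝ → ℝ) : ℝ := ∫ x : ℝ, |f x| / Real.sqrt |4 - x ^ 2|

/-- The semicircle density `ρ_sc(x) = (2π)⁻¹ √((4−x²)₊)`. -/
def semicircle (x : ℝ) : ℝ := (2 * π)⁻¹ * Real.sqrt (max (4 - x ^ 2) 0)

def chebW1 (φ : ℝ → ℝ) : ℝ := ∫ x in (-2:ℝ)..2, φ x * (2 - x ^ 2) / Real.sqrt (4 - x ^ 2)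

def chebW2 (φ : ℝ → ℝ) : ℝ := ∫ x in (-2:ℝ)..2, φ x * x / Real.sqrt (4 - x ^ 2)

/-- The universal part of the limiting variance functional. -/
def Vmain (φ : ℝ → ℝ) : ℝ :=
  (2 * π ^ 2)⁻¹ * ∫ x in (-2:ℝ)..2, ∫ u in (-2:ℝ)..2,
    (φ x - φ u) ^ 2 / (x - u) ^ 2 *
      ((4 - x * u) / (Real.sqrt (4 - x ^ 2) * Real.sqrt (4 - u ^ 2)))

/-- The variance functional `V(φ)` (with `N`-dependent third-cumulant correction). -/
def Vfun (Nr s3 s4 : ℝ) (φ : ℝ → ℝ) : ℝ :=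
  Vmain φ + s4 / (2 * π ^ 2) * chebW1 φ ^ 2
    - 2 * s3 / (π ^ 2 * Real.sqrt Nr) * chebW1 φ * chebW2 φ

/-- The limiting CLT variance `V_H(φ)`. -/
def VH (s4 : ℝ) (φ : ℝ → ℝ) : ℝ := Vmain φ + s4 / (2 * π ^ 2) * chebW1 φ ^ 2

/-- The correction `e(φ)` to the expectation of a linear spectral statistic. -/
def efun (Nr s3 s4 : ℝ) (φ : ℝ → ℝ) : ℝ :=
  -(2 * π)⁻¹ * (∫ x in (-2:ℝ)..2, φ x / Real.sqrt (4 - x ^ 2))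
  + (φ 2 + φ (-2)) / 4
  + s4 / (2 * π) * ∫ x in (-2:ℝ)..2, φ x * (x ^ 4 - 4 * x ^ 2 + 2) / Real.sqrt (4 - x ^ 2)
  + 2 * s3 / (π * Real.sqrt Nr) *
      ∫ x in (-2:ℝ)..2, φ x * (3 * x - x ^ 3) / Real.sqrt (4 - x ^ 2)

/-- The skewness correction `B(φ)` in the characteristic function expansion. -/
def Bfun (φ : ℝ → ℝ) : ℝ := -(12 * π ^ 3)⁻¹ * chebW2 φ ^ 3

/-- The third cumulant `s₃ = E[(√N H₁₂)³]` of the rescaled off-diagonal entries. -/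
def s3of (μ : Measure Ω) {N : ℕ} (H : Ω → Matrix (Fin N) (Fin N) ℝ) : ℝ :=
  if h : 1 < N then ∫ ω, (Real.sqrt N * H ω ⟨0, by omega⟩ ⟨1, h⟩) ^ 3 ∂μ else 0

/-- The fourth cumulant `s₄ = E[(√N H₁₂)⁴] − 3` of the rescaled off-diagonal entries. -/
def s4of (μ : Measure Ω) {N : ℕ} (H : Ω → Matrix (Fin N) (Fin N) ℝ) : ℝ :=
  if h : 1 < N then (∫ ω, (Real.sqrt N * H ω ⟨0, by omega⟩ ⟨1, h⟩) ^ 4 ∂μ) - 3 else 0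

/-- The deterministic control parameter `Ψ(z)`, expressed in terms of the value `m = m_sc(z)`. -/
def PsiOf (Nr : ℝ) (z m : ℂ) : ℝ :=
  Real.sqrt (|m.im| / (Nr * |z.im|)) + (Nr * |z.im|)⁻¹

/-- The physicists' Hermite polynomials `H_n(x) = (−1)ⁿ e^{x²} (d/dx)ⁿ e^{−x²}`. -/
def physHermite (n : ℕ) (x : ℝ) : ℝ :=
  (-1 : ℝ) ^ n * Real.exp (x ^ 2) * iteratedDeriv n (fun t => Real.exp (-t ^ 2)) x

/-- The Hermite functions `φ_n(x) = (2ⁿ n! √π)^{−1/2} e^{−x²/2} H_n(x)`. -/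
def hermiteFun (n : ℕ) (x : ℝ) : ℝ :=
  ((2 : ℝ) ^ n * (n.factorial : ℝ) * Real.sqrt π) ^ (-(1 : ℝ) / 2) *
    Real.exp (-x ^ 2 / 2) * physHermite n x

end RMT

open MeasureTheory ProbabilityTheory Real Filter Topology RMT

noncomputable section

-- ===== auxiliary lemmas for stmt9 =====
section Stmt9Aux
open FourierTransform Complex

variable {w φ : ℝ → ℝ} {s : ℝ}

lemma norm_fourierT_w_le_one (him : ∀ ξ : ℝ, (fourierT w ξ).im = 0)
    (h0 : ∀ ξ : ℝ, 0 ≤ (fourierT w ξ).re) (h1 : ∀ ξ : ℝ, (fourierT w ξ).re ≤ 1) (ξ : ℝ) :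
    ‖fourierT w ξ‖ ≤ 1 := by
  have : fourierT w ξ = ((fourierT w ξ).re : ℂ) := Complex.ext rfl (by simp [him ξ])
  rw [this, Complex.norm_real, Real.norm_eq_abs, _root_.abs_of_nonneg (h0 ξ)]
  exact h1 ξ

lemma fourierT_w_integrable (hw : Integrable w)
    (hsupp : ∀ ξ : ℝ, |ξ| < 3 / 4 ∨ 8 / 3 < |ξ| → fourierT w ξ = 0)
    (hcont : Continuous (fourierT w)) :
    Integrable (fourierT w) := by
  apply hcont.integrable_of_hasCompactSupport
  apply HasCompactSupport.intro (isCompact_Icc (a := (-3 : ℝ)) (b := 3))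
  intro ξ hξ
  apply hsupp
  right
  have h : ξ < -3 ∨ 3 < ξ := by
    by_contra hcon
    push_neg at hcon
    exact hξ (Set.mem_Icc.mpr ⟨hcon.1, hcon.2⟩)
  rcases h with h | h
  · rw [abs_of_neg (by linarith)]; linarith
  · rw [_root_.abs_of_nonneg (by linarith)]; linarith

lemma fourierT_eq (f : ℝ → ℝ) (η : ℝ) :
    fourierT f η = 𝓕 (fun x => (f x : ℂ)) (-η / (2 * π)) := by
  rw [Real.fourier_eq']
  unfold fourierT
  congr 1
  ext v
  rw [smul_eq_mul, RCLike.inner_apply]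
  congr 1
  have : (-2) * π * (-η / (2 * π) * starRingEnd ℝ v) = η * v := by
    rw [conj_trivial]
    field_simp
  rw [this]
  push_cast
  ring_nf

lemma fourierT_continuous {f : ℝ → ℝ} (hf : Integrable f) : Continuous (fourierT f) := by
  have h : Continuous (𝓕 (fun x => (f x : ℂ))) :=
    VectorFourier.fourierIntegral_continuous Real.continuous_fourierChar
      (by simpa using continuous_inner (𝕜 := ℝ) (E := ℝ)) hf.ofReal
  have : Continuous fun η : ℝ => -η / (2 * π) := by continuity
  simpa [funext fun η => fourierT_eq f η, Function.comp_def] using h.comp this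

lemma fourierIntegral_eq_fourierT (f : ℝ → ℝ) (ξ : ℝ) :
    𝓕 (fun x => (f x : ℂ)) ξ = fourierT f (-(2 * π) * ξ) := by
  rw [fourierT_eq]
  congr 1
  field_simp

lemma lpw_inversion {f : ℝ → ℝ} (hf : Integrable f) (hc : Continuous f)
    (hFi : Integrable (fourierT f)) (u : ℝ) :
    (f u : ℂ) = (2 * π)⁻¹ • ∫ η : ℝ, fourierT f η * Complex.exp (-(Complex.I * η * u)) := by
  have hg : Integrable (fun x => (f x : ℂ)) := hf.ofReal
  have hgc : Continuous (fun x => (f x : ℂ)) := Complex.continuous_ofReal.comp hc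
  have h2pi : (-(2 * π) : ℝ) ≠ 0 := neg_ne_zero.mpr (by positivity)
  have hFg : Integrable (𝓕 (fun x => (f x : ℂ))) := by
    have heq : (𝓕 (fun x => (f x : ℂ))) = fun ξ => fourierT f ((-(2 * π)) * ξ) := by
      ext ξ; rw [fourierIntegral_eq_fourierT]
    rw [heq]
    exact hFi.comp_mul_left' h2pi
  have hinv := hg.fourierInv_fourier_eq hFg (hgc.continuousAt (x := u))
  rw [Real.fourierInv_eq'] at hinv
  -- hinv : ∫ v, Complex.exp (↑(2π ⟪v,u⟫) * I) • 𝓕 g v = ↑(f u)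
  rw [← hinv]
  -- change of variables v = (-(2π))⁻¹ * η
  have key : (fun v : ℝ => Complex.exp ((↑(2 * π * (inner ℝ v u : ℝ)) * Complex.I)) • 𝓕 (fun x => (f x : ℂ)) v)
      = fun v : ℝ => (fun η : ℝ => fourierT f η * Complex.exp (-(Complex.I * η * u))) ((-(2*π)) * v) := by
    ext v
    rw [fourierIntegral_eq_fourierT, smul_eq_mul, mul_comm]
    congr 2
    rw [RCLike.inner_apply]
    simp only [conj_trivial]
    push_cast
    ring_nf
  rw [key]
  have h := MeasureTheory.Measure.integral_comp_mul_left
    (fun η : ℝ => fourierT f η * Complex.exp (-(Complex.I * η * u))) (-(2*π))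
  rw [h]
  congr 1
  rw [abs_inv, abs_neg, _root_.abs_of_nonneg (le_of_lt (by positivity))]

lemma norm_exp_I_mul (a b : ℝ) : ‖Complex.exp (-(Complex.I * a * b))‖ = 1 := by
  rw [Complex.norm_exp]
  simp

variable {w φ : ℝ → ℝ} {s : ℝ}

/-- Majorant used in the AM–GM step. -/
def maj (s t β : ℝ) (φ : ℝ → ℝ) (q : ℝ) (η : ℝ) : ℝ :=
  t / 2 * sobolevWeight (1 / 2 + s) φ (q * η)
    + Set.indicator (Set.Icc (-3 : ℝ) 3) (fun _ => 1 / (2 * t) * β) η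

lemma sobolevWeight_nonneg (s : ℝ) (φ : ℝ → ℝ) (ξ : ℝ) : 0 ≤ sobolevWeight s φ ξ := by
  unfold sobolevWeight
  have : (0:ℝ) ≤ 1 + |ξ| ^ (2 * s) := by positivity
  positivity

/-- AM–GM pointwise bound. -/
lemma pointwise_amgm (hs : 0 < s)
    (hw1 : ∀ ξ : ℝ, ‖fourierT w ξ‖ ≤ 1)
    (hsupp : ∀ ξ : ℝ, |ξ| < 3 / 4 ∨ 8 / 3 < |ξ| → fourierT w ξ = 0)
    {q t : ℝ} (hq : 0 < q) (ht : 0 < t) (η : ℝ) :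
    ‖fourierT w η‖ * ‖fourierT φ (q * η)‖ ≤
      maj s t ((3 / 4 * q) ^ (-(1 + 2 * s))) φ q η := by
  have hmaj_nonneg : ∀ β ≥ (0:ℝ), 0 ≤ maj s t β φ q η := by
    intro β hβ
    unfold maj
    have h1 : (0:ℝ) ≤ t / 2 * sobolevWeight (1 / 2 + s) φ (q * η) :=
      mul_nonneg (by positivity) (sobolevWeight_nonneg _ _ _)
    have h2 : (0:ℝ) ≤ Set.indicator (Set.Icc (-3 : ℝ) 3) (fun _ => 1 / (2 * t) * β) η :=
      Set.indicator_nonneg (fun _ _ => by positivity) η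
    linarith
  have hβpos : (0:ℝ) < (3 / 4 * q) ^ (-(1 + 2 * s)) := Real.rpow_pos_of_pos (by linarith) _
  by_cases hξ : 3 / 4 ≤ |η| ∧ |η| ≤ 8 / 3
  · -- main case
    have hmem : η ∈ Set.Icc (-3 : ℝ) 3 := by
      rcases abs_le.mp hξ.2 with ⟨h1, h2⟩
      exact Set.mem_Icc.mpr ⟨by linarith, by linarith⟩
    set a := ‖fourierT φ (q * η)‖ with ha
    have ha0 : 0 ≤ a := norm_nonneg _
    set W := 1 + |q * η| ^ (2 * (1 / 2 + s)) with hW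
    have hW1 : (1:ℝ) ≤ W := by
      have : (0:ℝ) ≤ |q * η| ^ (2 * (1 / 2 + s)) := Real.rpow_nonneg (abs_nonneg _) _
      simp only [hW]; linarith
    have hWpos : (0:ℝ) < W := by linarith
    -- a ≤ t/2 * (a^2 * W) + 1/(2t) * W⁻¹
    have key : a ≤ t / 2 * (a ^ 2 * W) + 1 / (2 * t) * W⁻¹ := by
      have hsq : 0 ≤ (t * (a * Real.sqrt W) - Real.sqrt W⁻¹) ^ 2 := sq_nonneg _
      have hsw : Real.sqrt W * Real.sqrt W = W := Real.mul_self_sqrt hWpos.le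
      have hsw' : Real.sqrt W⁻¹ * Real.sqrt W⁻¹ = W⁻¹ :=
        Real.mul_self_sqrt (by positivity)
      have hsww : Real.sqrt W⁻¹ * Real.sqrt W = 1 := by
        rw [Real.sqrt_inv]
        exact inv_mul_cancel₀ (Real.sqrt_ne_zero'.mpr hWpos)
      have e1 : (t * (a * Real.sqrt W) - Real.sqrt W⁻¹) ^ 2
          = t ^ 2 * a ^ 2 * (Real.sqrt W * Real.sqrt W)
            - 2 * t * a * (Real.sqrt W⁻¹ * Real.sqrt W) + Real.sqrt W⁻¹ * Real.sqrt W⁻¹ := by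
        ring
      rw [e1, hsw, hsww, hsw'] at hsq
      have h2 : 0 ≤ t ^ 2 * a ^ 2 * W - 2 * t * a + W⁻¹ := by linarith
      have h3 : t / 2 * (a ^ 2 * W) + 1 / (2 * t) * W⁻¹ - a
          = (1 / (2 * t)) * (t ^ 2 * a ^ 2 * W - 2 * t * a + W⁻¹) := by
        field_simp
        ring
      have h4 : (0:ℝ) ≤ (1 / (2 * t)) * (t ^ 2 * a ^ 2 * W - 2 * t * a + W⁻¹) :=
        mul_nonneg (by positivity) h2
      linarith
    -- identify a^2 * W with the Sobolev weight
    have hid : a ^ 2 * W = sobolevWeight (1 / 2 + s) φ (q * η) := by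
      rw [ha, hW]
      unfold sobolevWeight
      rfl
    have hWinv : W⁻¹ ≤ (3 / 4 * q) ^ (-(1 + 2 * s)) := by
      have hqa : 3 / 4 * q ≤ |q * η| := by
        rw [abs_mul, _root_.abs_of_nonneg hq.le]
        calc 3 / 4 * q = q * (3 / 4) := by ring
        _ ≤ q * |η| := by nlinarith [hξ.1]
      have hrle : (3 / 4 * q) ^ (1 + 2 * s) ≤ |q * η| ^ (1 + 2 * s) :=
        Real.rpow_le_rpow (by linarith) hqa (by linarith)
      have hexp : (2 : ℝ) * (1 / 2 + s) = 1 + 2 * s := by ring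
      have hWge : (3 / 4 * q) ^ (1 + 2 * s) ≤ W := by
        rw [hW, hexp]
        have : (0:ℝ) ≤ |q * η| ^ (1 + 2 * s) := Real.rpow_nonneg (abs_nonneg _) _
        linarith
      rw [Real.rpow_neg (by linarith : (0:ℝ) ≤ 3 / 4 * q)]
      exact inv_anti₀ (Real.rpow_pos_of_pos (by linarith) _) hWge
    calc ‖fourierT w η‖ * a ≤ 1 * a := mul_le_mul_of_nonneg_right (hw1 η) ha0
      _ = a := one_mul a
      _ ≤ t / 2 * (a ^ 2 * W) + 1 / (2 * t) * W⁻¹ := key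
      _ ≤ t / 2 * sobolevWeight (1 / 2 + s) φ (q * η)
            + 1 / (2 * t) * ((3 / 4 * q) ^ (-(1 + 2 * s))) := by
          rw [hid]
          have := mul_le_mul_of_nonneg_left hWinv (by positivity : (0:ℝ) ≤ 1 / (2 * t))
          linarith
      _ = maj s t ((3 / 4 * q) ^ (-(1 + 2 * s))) φ q η := by
          unfold maj
          rw [Set.indicator_of_mem hmem]
  · -- support case
    have h0 : fourierT w η = 0 := by
      apply hsupp
      rcases not_and_or.mp hξ with h | h
      · left; linarith [not_le.mp h]
      · right; linarith [not_le.mp h]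
    rw [h0]
    simpa using hmaj_nonneg _ hβpos.le

lemma maj_integrable (hφs : Integrable (sobolevWeight (1 / 2 + s) φ))
    {q t β : ℝ} (hq : 0 < q) :
    Integrable (maj s t β φ q) := by
  unfold maj
  apply Integrable.add
  · exact (hφs.comp_mul_left' hq.ne').const_mul _
  · rw [integrable_indicator_iff measurableSet_Icc]
    exact integrableOn_const (by simp [Real.volume_Icc])

lemma maj_integral (hφs : Integrable (sobolevWeight (1 / 2 + s) φ))
    {q t β : ℝ} (hq : 0 < q) :
    ∫ η : ℝ, maj s t β φ q η
      = t / 2 * (q⁻¹ * sobolevSq (1 / 2 + s) φ) + 1 / (2 * t) * β * 6 := by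
  unfold maj
  rw [integral_add ((hφs.comp_mul_left' hq.ne').const_mul _)
    ((integrable_indicator_iff measurableSet_Icc).mpr
      (integrableOn_const (by simp [Real.volume_Icc])))]
  congr 1
  · rw [MeasureTheory.integral_const_mul]
    congr 1
    have h := MeasureTheory.Measure.integral_comp_mul_left
      (sobolevWeight (1 / 2 + s) φ) q
    rw [h, abs_inv, _root_.abs_of_nonneg hq.le, smul_eq_mul]
    rfl
  · rw [integral_indicator measurableSet_Icc, setIntegral_const, smul_eq_mul]
    rw [measureReal_def, Real.volume_Icc]
    rw [ENNReal.toReal_ofReal (by norm_num)]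
    ring

lemma conv_bound (hs : 0 < s) (hφi : Integrable φ)
    (hφs : Integrable (sobolevWeight (1 / 2 + s) φ))
    (hwi : Integrable w) (hwc : Continuous w) (hFwi : Integrable (fourierT w))
    (hw1 : ∀ ξ : ℝ, ‖fourierT w ξ‖ ≤ 1)
    (hsupp : ∀ ξ : ℝ, |ξ| < 3 / 4 ∨ 8 / 3 < |ξ| → fourierT w ξ = 0)
    {q : ℝ} (hq : 0 < q) (x t : ℝ) (ht : 0 < t) :
    |∫ y : ℝ, q * w (q * (x - y)) * φ y| ≤ (2 * π)⁻¹ * (q *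
      (t / 2 * (q⁻¹ * sobolevSq (1/2+s) φ)
        + 1 / (2*t) * ((3/4*q) ^ (-(1+2*s))) * 6)) := by
  set β := (3/4*q) ^ (-(1+2*s)) with hβdef
  set f : ℝ → ℝ → ℂ := fun y η => (q:ℂ) * fourierT w η *
    Complex.exp (-(Complex.I * (η:ℂ) * ((q*(x - y) : ℝ) : ℂ))) * (φ y : ℂ) with hf
  set Gq : ℝ → ℂ := fun η => (q:ℂ) * fourierT w η *
    Complex.exp (-(Complex.I * (η:ℂ) * ((q*x : ℝ):ℂ))) * fourierT φ (q*η) with hGq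
  -- Step 1: complexify and insert the inversion formula
  have hcoe : ((∫ y : ℝ, q * w (q*(x-y)) * φ y : ℝ) : ℂ)
      = ∫ y : ℝ, ((q * w (q*(x-y)) * φ y : ℝ) : ℂ) := (integral_ofReal).symm
  have step1 : (((∫ y : ℝ, q * w (q*(x-y)) * φ y) : ℝ) : ℂ)
      = (2*π)⁻¹ • ∫ y : ℝ, ∫ η : ℝ, f y η := by
    rw [hcoe, ← integral_smul]
    congr 1
    ext y
    rw [Complex.ofReal_mul, Complex.ofReal_mul]
    rw [lpw_inversion hwi hwc hFwi (q*(x-y))]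
    rw [mul_smul_comm, smul_mul_assoc]
    congr 1
    rw [← MeasureTheory.integral_const_mul, ← MeasureTheory.integral_mul_const]
    congr 1
    ext η
    simp only [hf]
    ring
  -- Step 2: Fubini
  have hFint : Integrable (Function.uncurry f) (volume.prod volume) := by
    have hmeas : AEStronglyMeasurable (Function.uncurry f) (volume.prod volume) := by
      apply AEStronglyMeasurable.mul
      · apply Continuous.aestronglyMeasurable
        apply Continuous.mul
        · exact continuous_const.mul ((fourierT_continuous hwi).comp continuous_snd)
        · exact Complex.continuous_exp.comp (by fun_prop)
      · exact (hφi.ofReal.aestronglyMeasurable).comp_fst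
    apply Integrable.mono' (((hφi.abs.mul_const q)).mul_prod hFwi.norm) hmeas
    refine Filter.Eventually.of_forall fun p => ?_
    have hval : ‖Function.uncurry f p‖ = q * ‖fourierT w p.2‖ * 1 * |φ p.1| := by
      simp only [Function.uncurry, hf, norm_mul, norm_exp_I_mul, Complex.norm_real,
        Real.norm_eq_abs]
      rw [_root_.abs_of_nonneg hq.le]
    rw [hval]
    exact le_of_eq (by ring)
  have step2 : (∫ y : ℝ, ∫ η : ℝ, f y η) = ∫ η : ℝ, ∫ y : ℝ, f y η :=
    MeasureTheory.integral_integral_swap hFint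
  -- Step 3: evaluate the inner integral
  have step3 : ∀ η : ℝ, (∫ y : ℝ, f y η) = Gq η := by
    intro η
    have hfun : (fun y : ℝ => f y η) = fun y : ℝ =>
        ((q:ℂ) * fourierT w η * Complex.exp (-(Complex.I * (η:ℂ) * ((q*x:ℝ):ℂ)))) *
          (Complex.exp (Complex.I * ((q*η : ℝ):ℂ) * (y:ℂ)) * ((φ y : ℝ) : ℂ)) := by
      ext y
      simp only [hf]
      have harg : (-(Complex.I * (η:ℂ) * ((q*(x-y):ℝ):ℂ)))
          = (-(Complex.I * (η:ℂ) * ((q*x:ℝ):ℂ))) + Complex.I * ((q*η:ℝ):ℂ) * (y:ℂ) := by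
        push_cast; ring
      rw [harg, Complex.exp_add]
      ring
    rw [hfun, MeasureTheory.integral_const_mul]
    rfl
  have hGe : (fun η : ℝ => ‖∫ y : ℝ, f y η‖) = fun η : ℝ => ‖Gq η‖ :=
    funext fun η => by rw [step3 η]
  have hGnorm : ∀ η : ℝ, ‖Gq η‖ = q * (‖fourierT w η‖ * ‖fourierT φ (q * η)‖) := by
    intro η
    simp only [hGq, norm_mul, norm_exp_I_mul, Complex.norm_real, Real.norm_eq_abs]
    rw [_root_.abs_of_nonneg hq.le]
    ring
  have hGcont : Continuous Gq := by
    apply Continuous.mul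
    · apply Continuous.mul
      · exact continuous_const.mul (fourierT_continuous hwi)
      · exact Complex.continuous_exp.comp (by fun_prop)
    · exact (fourierT_continuous hφi).comp (continuous_const.mul continuous_id)
  have hGle : ∀ η : ℝ, ‖Gq η‖ ≤ q * maj s t β φ q η := by
    intro η
    rw [hGnorm η]
    exact mul_le_mul_of_nonneg_left (pointwise_amgm hs hw1 hsupp hq ht η) hq.le
  -- Step 4: assemble
  have habs : |∫ y : ℝ, q * w (q*(x-y)) * φ y|
      = ‖(((∫ y : ℝ, q * w (q*(x-y)) * φ y) : ℝ) : ℂ)‖ := by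
    rw [Complex.norm_real, Real.norm_eq_abs]
  rw [habs, step1, step2, norm_smul]
  have hnorm_inv : ‖(2*π)⁻¹‖ = (2*π)⁻¹ := by
    rw [Real.norm_eq_abs, abs_inv, _root_.abs_of_nonneg (by positivity : (0:ℝ) ≤ 2*π)]
  rw [hnorm_inv]
  apply mul_le_mul_of_nonneg_left _ (by positivity : (0:ℝ) ≤ (2*π)⁻¹)
  calc ‖∫ η : ℝ, ∫ y : ℝ, f y η‖ ≤ ∫ η : ℝ, ‖∫ y : ℝ, f y η‖ :=
      norm_integral_le_integral_norm _
    _ = ∫ η : ℝ, ‖Gq η‖ := by rw [hGe]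
    _ ≤ ∫ η : ℝ, q * maj s t β φ q η := by
      refine integral_mono ?_ ((maj_integrable hφs (t := t) (β := β) hq).const_mul q) hGle
      refine Integrable.mono' ((maj_integrable hφs (t := t) (β := β) hq).const_mul q)
        hGcont.norm.aestronglyMeasurable (Filter.Eventually.of_forall fun η => ?_)
      rw [Real.norm_eq_abs, abs_norm]
      exact hGle η
    _ = q * ∫ η : ℝ, maj s t β φ q η := MeasureTheory.integral_const_mul q _
    _ = q * (t / 2 * (q⁻¹ * sobolevSq (1/2+s) φ) + 1 / (2*t) * β * 6) := by
      rw [maj_integral hφs hq]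

lemma piece_bound2 (hs : 0 < s) (hφi : Integrable φ)
    (hφs : Integrable (sobolevWeight (1 / 2 + s) φ))
    (hwi : Integrable w) (hwc : Continuous w) (hFwi : Integrable (fourierT w))
    (hw1 : ∀ ξ : ℝ, ‖fourierT w ξ‖ ≤ 1)
    (hsupp : ∀ ξ : ℝ, |ξ| < 3 / 4 ∨ 8 / 3 < |ξ| → fourierT w ξ = 0)
    (k : ℕ) (x τ : ℝ) (hτ : 0 < τ) :
    |LPpiece w φ k x| ≤ ((2:ℝ) ^ (-s)) ^ k *
      ((2 * π)⁻¹ * (τ / 2 * sobolevSq (1/2+s) φ + 3 * ((3/4:ℝ) ^ (-(1+2*s))) / τ)) := by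
  set q : ℝ := (2:ℝ) ^ (k:ℕ) with hqdef
  have hq : (0:ℝ) < q := by positivity
  set qs : ℝ := q ^ (-s) with hqsdef
  have hqs : (0:ℝ) < qs := Real.rpow_pos_of_pos hq _
  have ht : (0:ℝ) < τ * qs := by positivity
  have hb := conv_bound (w := w) (φ := φ) hs hφi hφs hwi hwc hFwi hw1 hsupp hq x (τ * qs) ht
  have hLP : LPpiece w φ k x = ∫ y : ℝ, q * w (q * (x - y)) * φ y := rfl
  rw [hLP]
  refine le_trans hb (le_of_eq ?_)
  -- algebra
  have hsplit : ((3:ℝ)/4*q) ^ (-(1+2*s)) = ((3/4:ℝ) ^ (-(1+2*s))) * q ^ (-(1+2*s)) :=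
    Real.mul_rpow (by norm_num) hq.le
  have hrel : q ^ (-(1+2*s)) = qs * qs * q⁻¹ := by
    rw [hqsdef, ← Real.rpow_add hq, ← Real.rpow_neg_one q, ← Real.rpow_add hq]
    congr 1
    ring
  have hpow : ((2:ℝ) ^ (-s)) ^ k = qs := by
    rw [hqsdef, hqdef, ← Real.rpow_natCast ((2:ℝ)^(-s)) k, ← Real.rpow_natCast (2:ℝ) k,
      ← Real.rpow_mul (by norm_num : (0:ℝ) ≤ 2), ← Real.rpow_mul (by norm_num : (0:ℝ) ≤ 2),
      mul_comm]
  rw [hsplit, hrel, hpow]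
  field_simp
  ring

lemma sobolevSq_nonneg (s : ℝ) (φ : ℝ → ℝ) : 0 ≤ sobolevSq s φ :=
  integral_nonneg (sobolevWeight_nonneg s φ)

lemma tail_bound (hs : 0 < s) (hφi : Integrable φ)
    (hφs : Integrable (sobolevWeight (1 / 2 + s) φ))
    (hwi : Integrable w) (hwc : Continuous w) (hFwi : Integrable (fourierT w))
    (hw1 : ∀ ξ : ℝ, ‖fourierT w ξ‖ ≤ 1)
    (hsupp : ∀ ξ : ℝ, |ξ| < 3 / 4 ∨ 8 / 3 < |ξ| → fourierT w ξ = 0)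
    (M : ℕ) (x τ : ℝ) (hτ : 0 < τ) :
    |LPtail w φ M x| ≤ ((2:ℝ) ^ (-s)) ^ M * (1 - (2:ℝ) ^ (-s))⁻¹ *
      ((2 * π)⁻¹ * (τ / 2 * sobolevSq (1/2+s) φ + 3 * ((3/4:ℝ) ^ (-(1+2*s))) / τ)) := by
  set r : ℝ := (2:ℝ) ^ (-s) with hrdef
  have hr0 : (0:ℝ) ≤ r := (Real.rpow_pos_of_pos two_pos _).le
  have hr1 : r < 1 := Real.rpow_lt_one_of_one_lt_of_neg one_lt_two (by linarith)
  set D : ℝ := (2 * π)⁻¹ * (τ / 2 * sobolevSq (1/2+s) φ + 3 * ((3/4:ℝ) ^ (-(1+2*s))) / τ)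
    with hDdef
  have hD0 : 0 ≤ D := by
    have hS := sobolevSq_nonneg (1/2+s) φ
    have hc : (0:ℝ) ≤ (3/4:ℝ) ^ (-(1+2*s)) := Real.rpow_nonneg (by norm_num) _
    have : (0:ℝ) ≤ τ / 2 * sobolevSq (1/2+s) φ + 3 * ((3/4:ℝ) ^ (-(1+2*s))) / τ := by
      positivity
    positivity
  set tterm : ℕ → ℝ := fun k => if M ≤ k then LPpiece w φ k x else 0 with htt
  have hLPdef : LPtail w φ M x = ∑' k, tterm k := rfl
  have hshift : ∑' j : ℕ, tterm (M + j) = ∑' k, tterm k := by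
    apply Function.Injective.tsum_eq (add_right_injective M)
    intro k hk
    rcases le_or_gt M k with h | h
    · exact ⟨k - M, show M + (k - M) = k by omega⟩
    · exact absurd (if_neg (by omega)) hk
  have htb : ∀ j : ℕ, ‖tterm (M + j)‖ ≤ D * r ^ M * r ^ j := by
    intro j
    have := piece_bound2 (w := w) (φ := φ) hs hφi hφs hwi hwc hFwi hw1 hsupp (M + j) x τ hτ
    have h1 : tterm (M + j) = LPpiece w φ (M + j) x := by
      simp only [htt]
      rw [if_pos (Nat.le_add_right M j)]
    rw [h1, Real.norm_eq_abs]
    calc |LPpiece w φ (M + j) x| ≤ r ^ (M + j) * D := this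
      _ = D * r ^ M * r ^ j := by rw [pow_add]; ring
  have hgeom : HasSum (fun j : ℕ => D * r ^ M * r ^ j) (D * r ^ M * (1 - r)⁻¹) :=
    (hasSum_geometric_of_lt_one hr0 hr1).mul_left _
  have hmain : ‖∑' j : ℕ, tterm (M + j)‖ ≤ D * r ^ M * (1 - r)⁻¹ :=
    tsum_of_norm_bounded hgeom htb
  rw [hLPdef, ← hshift]
  calc |∑' j : ℕ, tterm (M + j)| ≤ D * r ^ M * (1 - r)⁻¹ := by simpa using hmain
    _ = r ^ M * (1 - r)⁻¹ * D := by ring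

lemma tail_bound_sqrt (hs : 0 < s) (hφi : Integrable φ)
    (hφs : Integrable (sobolevWeight (1 / 2 + s) φ))
    (hwi : Integrable w) (hwc : Continuous w) (hFwi : Integrable (fourierT w))
    (hw1 : ∀ ξ : ℝ, ‖fourierT w ξ‖ ≤ 1)
    (hsupp : ∀ ξ : ℝ, |ξ| < 3 / 4 ∨ 8 / 3 < |ξ| → fourierT w ξ = 0)
    (M : ℕ) (x : ℝ) :
    |LPtail w φ M x| ≤ ((2:ℝ) ^ (-s)) ^ M * (1 - (2:ℝ) ^ (-s))⁻¹ *
      ((2 * π)⁻¹ * (1/2 + 3 * ((3/4:ℝ) ^ (-(1+2*s))))) *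
        Real.sqrt (sobolevSq (1/2+s) φ) := by
  set r : ℝ := (2:ℝ) ^ (-s) with hrdef
  have hr0 : (0:ℝ) ≤ r := (Real.rpow_pos_of_pos two_pos _).le
  have hr1 : r < 1 := Real.rpow_lt_one_of_one_lt_of_neg one_lt_two (by linarith)
  set c34 : ℝ := (3/4:ℝ) ^ (-(1+2*s)) with hc34
  have hc0 : 0 ≤ c34 := Real.rpow_nonneg (by norm_num) _
  set S : ℝ := sobolevSq (1/2+s) φ with hSdef
  have hS0 : 0 ≤ S := sobolevSq_nonneg _ _
  rcases eq_or_lt_of_le hS0 with hS | hS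
  · -- S = 0
    have hsqrt : Real.sqrt S = 0 := by rw [← hS, Real.sqrt_zero]
    rw [hsqrt, mul_zero]
    set A : ℝ := r ^ M * (1 - r)⁻¹ * ((2 * π)⁻¹ * (3 * c34)) with hA
    have h1r : (0:ℝ) < 1 - r := by linarith
    have hA0 : 0 ≤ A := by positivity
    refine le_of_forall_pos_le_add fun ε hε => ?_
    have hτpos : (0:ℝ) < (A + 1) / ε := by positivity
    have hb := tail_bound (w := w) (φ := φ) hs hφi hφs hwi hwc hFwi hw1 hsupp M x _ hτpos
    rw [← hSdef, ← hS] at hb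
    have hval : r ^ M * (1 - r)⁻¹ *
        ((2 * π)⁻¹ * ((A + 1) / ε / 2 * 0 + 3 * c34 / ((A + 1) / ε)))
        = A * (ε / (A + 1)) := by
      rw [hA, mul_zero, zero_add, div_div_eq_mul_div]
      ring
    rw [hval] at hb
    have hfrac : A / (A + 1) ≤ 1 := by
      rw [div_le_one (by positivity)]
      linarith
    calc |LPtail w φ M x| ≤ A * (ε / (A + 1)) := hb
      _ = ε * (A / (A + 1)) := by ring
      _ ≤ ε * 1 := mul_le_mul_of_nonneg_left hfrac hε.le
      _ = 0 + ε := by ring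
  · -- S > 0
    have hsq : (0:ℝ) < Real.sqrt S := Real.sqrt_pos.mpr hS
    have hτ : (0:ℝ) < (Real.sqrt S)⁻¹ := by positivity
    have hb := tail_bound (w := w) (φ := φ) hs hφi hφs hwi hwc hFwi hw1 hsupp M x _ hτ
    rw [← hSdef, ← hc34] at hb
    have hss : Real.sqrt S * Real.sqrt S = S := Real.mul_self_sqrt hS0
    have h1 : (Real.sqrt S)⁻¹ / 2 * S = Real.sqrt S / 2 := by
      field_simp
      linarith [hss]
    have h2 : 3 * c34 / (Real.sqrt S)⁻¹ = 3 * c34 * Real.sqrt S := by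
      rw [div_eq_mul_inv, inv_inv]

    rw [h1, h2] at hb
    refine le_trans hb (le_of_eq ?_)
    ring

lemma specTr_abs_le {N : ℕ} (ψ : ℝ → ℝ) (K : ℝ) (hK : 0 ≤ K) (hψ : ∀ x, |ψ x| ≤ K)
    (A : Matrix (Fin N) (Fin N) ℝ) : |specTr ψ A| ≤ N * K := by
  unfold specTr
  split
  · rename_i h
    calc |∑ i, ψ (h.eigenvalues i)| ≤ ∑ i, |ψ (h.eigenvalues i)| :=
        Finset.abs_sum_le_sum_abs _ _
      _ ≤ ∑ _i : Fin N, K := Finset.sum_le_sum fun i _ => hψ _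
      _ = N * K := by
        rw [Finset.sum_const, Finset.card_univ, Fintype.card_fin, nsmul_eq_mul]
  · simpa using (by positivity : (0:ℝ) ≤ (N:ℝ) * K)

lemma varRV_le_of_sq_bound {Ω : Type} [MeasurableSpace Ω] (μ : Measure Ω)
    (hprob : IsProbabilityMeasure μ) (X : Ω → ℝ) (B : ℝ) (hB : 0 ≤ B)
    (h : ∀ ω, X ω ^ 2 ≤ B) : varRV μ X ≤ B := by
  unfold varRV
  have h1 : (∫ ω, X ω ^ 2 ∂μ) ≤ B := by
    by_cases hi : Integrable (fun ω => X ω ^ 2) μ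
    · calc (∫ ω, X ω ^ 2 ∂μ) ≤ ∫ _ω, B ∂μ := integral_mono hi (integrable_const B) h
        _ = B := by simp
    · rw [integral_undef hi]; exact hB
  nlinarith [sq_nonneg (∫ ω, X ω ∂μ)]

end Stmt9Aux

theorem stmt9 (lph lpw : ℝ → ℝ) (hLP : IsLittlewoodPaleyPair lph lpw)
    (Cmom : ℕ → ℝ) (s ε : ℝ) (hε : 0 < ε) (hεs : ε < s) :
    ∃ C : ℝ, 0 < C ∧
      ∀ (N : ℕ) (Ω : Type) [MeasurableSpace Ω] (μ : Measure Ω)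
        (H : Ω → Matrix (Fin N) (Fin N) ℝ),
        IsWignerMatrix μ Cmom N H →
        ∀ φ : ℝ → ℝ, Integrable φ → MemLp φ 2 volume → HsFinite (1 / 2 + s) φ →
          ∀ M : ℕ, 10 ^ 4 ≤ M →
            varRV μ (fun ω => specTr (LPtail lpw φ M) (H ω))
              ≤ C * (N : ℝ) ^ 2 * (2 : ℝ) ^ ((M : ℝ) * (ε - 2 * s)) *
                  sobolevSq (1 / 2 + s) φ := by
  classical
  -- constants
  set r : ℝ := (2:ℝ) ^ (-s) with hrdef
  have hs : 0 < s := lt_trans hε hεs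
  have hr0 : (0:ℝ) ≤ r := (Real.rpow_pos_of_pos two_pos _).le
  have hr1 : r < 1 := Real.rpow_lt_one_of_one_lt_of_neg one_lt_two (by linarith)
  have h1r : (0:ℝ) < 1 - r := by linarith
  set c34 : ℝ := (3/4:ℝ) ^ (-(1+2*s)) with hc34
  have hc0 : 0 ≤ c34 := Real.rpow_nonneg (by norm_num) _
  set C1 : ℝ := (1 - r)⁻¹ * ((2 * π)⁻¹ * (1/2 + 3 * c34)) with hC1
  have hC10 : 0 ≤ C1 := by positivity
  refine ⟨C1 ^ 2 + 1, by positivity, ?_⟩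
  intro N Ω' _ μ H hWig φ hφi _hφ2 hHs M _hM
  haveI := hWig.prob
  set S : ℝ := sobolevSq (1/2 + s) φ with hSdef
  have hS0 : 0 ≤ S := sobolevSq_nonneg _ _
  have hφs : Integrable (sobolevWeight (1/2 + s) φ) := hHs
  -- properties of the LP kernel
  have hwi : Integrable lpw := hLP.w_int
  have hwc : Continuous lpw := hLP.w_smooth.continuous
  have hw1 : ∀ ξ : ℝ, ‖fourierT lpw ξ‖ ≤ 1 :=
    norm_fourierT_w_le_one hLP.what_real hLP.what_nonneg hLP.what_le_one
  have hFwi : Integrable (fourierT lpw) :=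
    fourierT_w_integrable hLP.w_int hLP.what_supp (fourierT_continuous hLP.w_int)
  -- pointwise bound on the tail
  set K : ℝ := r ^ M * (1 - r)⁻¹ * ((2 * π)⁻¹ * (1/2 + 3 * c34)) * Real.sqrt S with hK
  have hK0 : 0 ≤ K := by positivity
  have htail : ∀ x : ℝ, |LPtail lpw φ M x| ≤ K :=
    fun x => tail_bound_sqrt hs hφi hφs hwi hwc hFwi hw1 hLP.what_supp M x
  -- trace bound
  have hXb : ∀ ω, (specTr (LPtail lpw φ M) (H ω)) ^ 2 ≤ ((N:ℝ) * K) ^ 2 := by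
    intro ω
    have h1 : |specTr (LPtail lpw φ M) (H ω)| ≤ (N:ℝ) * K :=
      specTr_abs_le _ K hK0 htail (H ω)
    calc (specTr (LPtail lpw φ M) (H ω)) ^ 2
        = |specTr (LPtail lpw φ M) (H ω)| ^ 2 := (sq_abs _).symm
      _ ≤ ((N:ℝ) * K) ^ 2 := pow_le_pow_left₀ (abs_nonneg _) h1 2
  have hvar := varRV_le_of_sq_bound μ hWig.prob _ (((N:ℝ) * K) ^ 2) (by positivity) hXb
  refine le_trans hvar ?_
  -- final arithmetic
  have hrM : (r ^ M) ^ 2 ≤ (2:ℝ) ^ ((M:ℝ) * (ε - 2 * s)) := by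
    have h1 : (r ^ M) ^ 2 = (2:ℝ) ^ ((M:ℝ) * (-2 * s)) := by
      rw [hrdef, ← pow_mul, ← Real.rpow_natCast ((2:ℝ) ^ (-s)) (M * 2),
        ← Real.rpow_mul (by norm_num : (0:ℝ) ≤ 2)]
      congr 1
      push_cast
      ring
    rw [h1]
    apply Real.rpow_le_rpow_left_iff (x := (2:ℝ)) one_lt_two |>.mpr
    have : (0:ℝ) ≤ (M:ℝ) * ε := by positivity
    nlinarith
  have hsqS : Real.sqrt S ^ 2 = S := Real.sq_sqrt hS0
  have hexpand : ((N:ℝ) * K) ^ 2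
      = (N:ℝ) ^ 2 * ((r ^ M) ^ 2 * (C1 ^ 2 * (Real.sqrt S * Real.sqrt S))) := by
    rw [hK, hC1]
    ring
  rw [Real.mul_self_sqrt hS0] at hexpand
  rw [hexpand]
  have hstep : (N:ℝ) ^ 2 * ((r ^ M) ^ 2 * (C1 ^ 2 * S))
      ≤ (N:ℝ) ^ 2 * ((2:ℝ) ^ ((M:ℝ) * (ε - 2 * s)) * ((C1 ^ 2 + 1) * S)) := by
    apply mul_le_mul_of_nonneg_left _ (by positivity)
    apply mul_le_mul hrM _ (by positivity) (Real.rpow_nonneg (by norm_num) _)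
    exact mul_le_mul_of_nonneg_right (by nlinarith) hS0
  refine le_trans hstep (le_of_eq ?_)
  rw [hSdef]
  ring
end
end
end

section
/- Let z, w be complex numbers with Im z > 0, Im w > 0 and z ≠ w. Then 1 − m_sc(z) m_sc(w) ≠ 0 and (m_sc(z) − m_sc(w))/(z − w) = m_sc(z) m_sc(w)/(1 − m_sc(z) m_sc(w)). More generally, if m, n, z, w ∈ ℂ satisfy m² + z m + 1 = 0, n² + w n + 1 = 0, z ≠ w and m n ≠ 1, then (m − n)/(z − w) = m n/(1 − m n). -/
open MeasureTheory ProbabilityTheory Real Filter Topology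

noncomputable section

open MeasureTheory ProbabilityTheory Real Filter Topology RMT

noncomputable section


lemma key_id (m n z w : ℂ) (hm : m ^ 2 + z * m + 1 = 0) (hn : n ^ 2 + w * n + 1 = 0) :
    (z - w) * (m * n) = (m - n) * (1 - m * n) := by
  linear_combination n * hm - m * hn

lemma key_ne (m n z w : ℂ) (hm : m ^ 2 + z * m + 1 = 0) (hn : n ^ 2 + w * n + 1 = 0)
    (hzw : z ≠ w) : m * n ≠ 1 := by
  have hm0 : m ≠ 0 := by rintro rfl; simp at hm
  have hn0 : n ≠ 0 := by rintro rfl; simp at hn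
  intro h
  have h0 : (z - w) * (m * n) = 0 := by rw [key_id m n z w hm hn, h]; ring
  rcases mul_eq_zero.mp h0 with h' | h'
  · exact hzw (sub_eq_zero.mp h')
  · rcases mul_eq_zero.mp h' with h'' | h'' <;> [exact hm0 h''; exact hn0 h'']

lemma key_eq (m n z w : ℂ) (hm : m ^ 2 + z * m + 1 = 0) (hn : n ^ 2 + w * n + 1 = 0)
    (hzw : z ≠ w) (hmn : m * n ≠ 1) :
    (m - n) / (z - w) = m * n / (1 - m * n) := by
  have hzw' : z - w ≠ 0 := sub_ne_zero.mpr hzw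
  have hmn' : (1 : ℂ) - m * n ≠ 0 := sub_ne_zero.mpr (Ne.symm hmn)
  rw [div_eq_div_iff hzw' hmn']
  linear_combination -(key_id m n z w hm hn)

theorem stmt16 :
    (∀ z w m n : ℂ, 0 < z.im → 0 < w.im → z ≠ w →
      m ^ 2 + z * m + 1 = 0 → 0 < m.im → n ^ 2 + w * n + 1 = 0 → 0 < n.im →
      1 - m * n ≠ 0 ∧ (m - n) / (z - w) = m * n / (1 - m * n))
    ∧
    (∀ m n z w : ℂ, m ^ 2 + z * m + 1 = 0 → n ^ 2 + w * n + 1 = 0 → z ≠ w → m * n ≠ 1 →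
      (m - n) / (z - w) = m * n / (1 - m * n)) := by
  constructor
  · intro z w m n _ _ hzw hm _ hn _
    have hmn := key_ne m n z w hm hn hzw
    exact ⟨sub_ne_zero.mpr (Ne.symm hmn), key_eq m n z w hm hn hzw hmn⟩
  · exact fun m n z w hm hn hzw hmn => key_eq m n z w hm hn hzw hmn
end
end
end

section
/- There exists C > 0 such that for all E ∈ [0, 5) and all η ∈ (0, 1/10): η² ∫_{−10}^{10} ∫_{−10}^{10} |(x+y)(x+y−2E)| / ((x²+η²)(y²+η²)((x−E)²+η²)((y−E)²+η²)) dx dy ≤ C (E² + η²)^{−1}. -/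
open MeasureTheory ProbabilityTheory Real Filter Topology

noncomputable section

open MeasureTheory ProbabilityTheory Real Filter Topology RMT

noncomputable section

lemma cauchy_int_le (c η : ℝ) (hη : 0 < η) :
    ∫ t in Set.Ioo (-10:ℝ) 10, ((t - c) ^ 2 + η ^ 2)⁻¹ ≤ π / η := by
  have hcont : Continuous fun t : ℝ => ((t - c) ^ 2 + η ^ 2)⁻¹ :=
    Continuous.inv₀ (by continuity) (fun t => by positivity)
  have hderiv : ∀ t : ℝ, HasDerivAt (fun u : ℝ => η⁻¹ * Real.arctan ((u - c) / η))
      (((t - c) ^ 2 + η ^ 2)⁻¹) t := by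
    intro t
    have h1 : HasDerivAt (fun u : ℝ => (u - c) / η) (1 / η) t := by
      simpa using (((hasDerivAt_id t).sub_const c).div_const η)
    have h2 := (Real.hasDerivAt_arctan ((t - c) / η)).comp t h1
    have h3 := h2.const_mul η⁻¹
    refine h3.congr_deriv ?_
    have hη' : η ≠ 0 := ne_of_gt hη
    field_simp
    ring
  have heq : ∫ t in Set.Ioo (-10:ℝ) 10, ((t - c) ^ 2 + η ^ 2)⁻¹
      = ∫ t in (-10:ℝ)..10, ((t - c) ^ 2 + η ^ 2)⁻¹ := by
    rw [intervalIntegral.integral_of_le (by norm_num), integral_Ioc_eq_integral_Ioo]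
  rw [heq, intervalIntegral.integral_eq_sub_of_hasDerivAt (fun t _ => hderiv t)
    (hcont.intervalIntegrable _ _)]
  have h1 : Real.arctan ((10 - c) / η) < π / 2 := Real.arctan_lt_pi_div_two _
  have h2 : -(π / 2) < Real.arctan ((-10 - c) / η) := Real.neg_pi_div_two_lt_arctan _
  have hη' : (0:ℝ) < η⁻¹ := by positivity
  have h3 : η⁻¹ * (π / 2) + η⁻¹ * (π / 2) = π / η := by field_simp; ring
  nlinarith

lemma pointwise_bound (E η x y : ℝ) (hη : 0 < η) :
    |(x + y) * (x + y - 2 * E)| /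
        ((x ^ 2 + η ^ 2) * (y ^ 2 + η ^ 2) * ((x - E) ^ 2 + η ^ 2) * ((y - E) ^ 2 + η ^ 2))
      ≤ 4 / (E ^ 2 + η ^ 2) *
        (((x ^ 2 + η ^ 2)⁻¹ + ((x - E) ^ 2 + η ^ 2)⁻¹) *
          (((y ^ 2 + η ^ 2)⁻¹ + ((y - E) ^ 2 + η ^ 2)⁻¹)) ) := by
  have hA : (0:ℝ) < x ^ 2 + η ^ 2 := by positivity
  have hB : (0:ℝ) < (x - E) ^ 2 + η ^ 2 := by positivity
  have hA' : (0:ℝ) < y ^ 2 + η ^ 2 := by positivity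
  have hB' : (0:ℝ) < (y - E) ^ 2 + η ^ 2 := by positivity
  have hs : (0:ℝ) < E ^ 2 + η ^ 2 := by positivity
  have hP : (0:ℝ) < (x ^ 2 + η ^ 2) + ((x - E) ^ 2 + η ^ 2) := by positivity
  have hQ : (0:ℝ) < (y ^ 2 + η ^ 2) + ((y - E) ^ 2 + η ^ 2) := by positivity
  have hNP : |(x + y) * (x + y - 2 * E)|
      ≤ ((x ^ 2 + η ^ 2) + ((x - E) ^ 2 + η ^ 2)) + ((y ^ 2 + η ^ 2) + ((y - E) ^ 2 + η ^ 2)) := by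
    rw [abs_le]
    constructor
    · nlinarith [sq_nonneg (x - y), sq_nonneg ((x + y) + (x + y - 2 * E)), sq_nonneg η, sq_nonneg E]
    · nlinarith [sq_nonneg (x - y), sq_nonneg E, sq_nonneg η]
  have hsP : E ^ 2 + η ^ 2 ≤ 2 * ((x ^ 2 + η ^ 2) + ((x - E) ^ 2 + η ^ 2)) := by
    nlinarith [sq_nonneg (2 * x - E), sq_nonneg η]
  have hsQ : E ^ 2 + η ^ 2 ≤ 2 * ((y ^ 2 + η ^ 2) + ((y - E) ^ 2 + η ^ 2)) := by
    nlinarith [sq_nonneg (2 * y - E), sq_nonneg η]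
  have hNs : |(x + y) * (x + y - 2 * E)| * (E ^ 2 + η ^ 2)
      ≤ 4 * (((x ^ 2 + η ^ 2) + ((x - E) ^ 2 + η ^ 2)) * ((y ^ 2 + η ^ 2) + ((y - E) ^ 2 + η ^ 2))) := by
    nlinarith [mul_le_mul_of_nonneg_right hNP hs.le,
      mul_le_mul_of_nonneg_left hsQ hP.le, mul_le_mul_of_nonneg_left hsP hQ.le]
  have hrhs : 4 / (E ^ 2 + η ^ 2) *
        (((x ^ 2 + η ^ 2)⁻¹ + ((x - E) ^ 2 + η ^ 2)⁻¹) *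
          (((y ^ 2 + η ^ 2)⁻¹ + ((y - E) ^ 2 + η ^ 2)⁻¹)) )
      = (4 * (((x ^ 2 + η ^ 2) + ((x - E) ^ 2 + η ^ 2)) * ((y ^ 2 + η ^ 2) + ((y - E) ^ 2 + η ^ 2)))) /
        ((E ^ 2 + η ^ 2) * ((x ^ 2 + η ^ 2) * (y ^ 2 + η ^ 2) * ((x - E) ^ 2 + η ^ 2) * ((y - E) ^ 2 + η ^ 2))) := by
    field_simp
    ring
  rw [hrhs, div_le_div_iff₀ (by positivity) (by positivity)]
  calc |(x + y) * (x + y - 2 * E)| *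
        ((E ^ 2 + η ^ 2) * ((x ^ 2 + η ^ 2) * (y ^ 2 + η ^ 2) * ((x - E) ^ 2 + η ^ 2) * ((y - E) ^ 2 + η ^ 2)))
      = (|(x + y) * (x + y - 2 * E)| * (E ^ 2 + η ^ 2)) *
        ((x ^ 2 + η ^ 2) * (y ^ 2 + η ^ 2) * ((x - E) ^ 2 + η ^ 2) * ((y - E) ^ 2 + η ^ 2)) := by ring
    _ ≤ (4 * (((x ^ 2 + η ^ 2) + ((x - E) ^ 2 + η ^ 2)) * ((y ^ 2 + η ^ 2) + ((y - E) ^ 2 + η ^ 2)))) *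
        ((x ^ 2 + η ^ 2) * (y ^ 2 + η ^ 2) * ((x - E) ^ 2 + η ^ 2) * ((y - E) ^ 2 + η ^ 2)) :=
        mul_le_mul_of_nonneg_right hNs (by positivity)

theorem stmt17 :
    ∃ C : ℝ, 0 < C ∧
      ∀ E η : ℝ, 0 ≤ E → E < 5 → 0 < η → η < 1 / 10 →
        η ^ 2 * ∫ x in Set.Ioo (-10 : ℝ) 10, ∫ y in Set.Ioo (-10 : ℝ) 10,
            |(x + y) * (x + y - 2 * E)| /
              ((x ^ 2 + η ^ 2) * (y ^ 2 + η ^ 2) * ((x - E) ^ 2 + η ^ 2) *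
                ((y - E) ^ 2 + η ^ 2))
          ≤ C / (E ^ 2 + η ^ 2) := by
  refine ⟨160, by norm_num, fun E η hE hE5 hη hη10 => ?_⟩
  have hs : (0:ℝ) < E ^ 2 + η ^ 2 := by positivity
  set g : ℝ → ℝ := fun t => (t ^ 2 + η ^ 2)⁻¹ + ((t - E) ^ 2 + η ^ 2)⁻¹ with hgdef
  have hgc : Continuous g := by
    apply Continuous.add
    · exact Continuous.inv₀ (by continuity) (fun t => by positivity)
    · exact Continuous.inv₀ (by continuity) (fun t => by positivity)
  have hg_nonneg : ∀ t, 0 ≤ g t := fun t => by simp only [hgdef]; positivity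
  have hgint : IntegrableOn g (Set.Ioo (-10:ℝ) 10) volume :=
    (hgc.integrableOn_Icc).mono_set Set.Ioo_subset_Icc_self
  have h1int : IntegrableOn (fun t : ℝ => (t ^ 2 + η ^ 2)⁻¹) (Set.Ioo (-10:ℝ) 10) volume :=
    ((Continuous.inv₀ (by continuity) (fun t => by positivity)).integrableOn_Icc).mono_set
      Set.Ioo_subset_Icc_self
  have h2int : IntegrableOn (fun t : ℝ => ((t - E) ^ 2 + η ^ 2)⁻¹) (Set.Ioo (-10:ℝ) 10) volume :=
    ((Continuous.inv₀ (by continuity) (fun t => by positivity)).integrableOn_Icc).mono_set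
      Set.Ioo_subset_Icc_self
  have hM : ∫ t in Set.Ioo (-10:ℝ) 10, g t ≤ 2 * π / η := by
    have h0 : ∫ t in Set.Ioo (-10:ℝ) 10, (t ^ 2 + η ^ 2)⁻¹ ≤ π / η := by
      simpa using cauchy_int_le 0 η hη
    have hEc := cauchy_int_le E η hη
    rw [hgdef]
    rw [integral_add h1int h2int]
    have : (2:ℝ) * π / η = π / η + π / η := by ring
    rw [this]
    exact add_le_add h0 hEc
  have hMnn : 0 ≤ ∫ t in Set.Ioo (-10:ℝ) 10, g t := integral_nonneg hg_nonneg
  -- inner bound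
  have hinner : ∀ x : ℝ,
      (∫ y in Set.Ioo (-10:ℝ) 10, |(x + y) * (x + y - 2 * E)| /
        ((x ^ 2 + η ^ 2) * (y ^ 2 + η ^ 2) * ((x - E) ^ 2 + η ^ 2) * ((y - E) ^ 2 + η ^ 2)))
      ≤ 4 / (E ^ 2 + η ^ 2) * (2 * π / η) * g x := by
    intro x
    have h1 : (∫ y in Set.Ioo (-10:ℝ) 10, |(x + y) * (x + y - 2 * E)| /
          ((x ^ 2 + η ^ 2) * (y ^ 2 + η ^ 2) * ((x - E) ^ 2 + η ^ 2) * ((y - E) ^ 2 + η ^ 2)))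
        ≤ ∫ y in Set.Ioo (-10:ℝ) 10, (4 / (E ^ 2 + η ^ 2) * g x) * g y := by
      refine integral_mono_of_nonneg (Filter.Eventually.of_forall fun y => by positivity)
        (hgint.const_mul _) (Filter.Eventually.of_forall fun y => ?_)
      have := pointwise_bound E η x y hη
      calc |(x + y) * (x + y - 2 * E)| /
            ((x ^ 2 + η ^ 2) * (y ^ 2 + η ^ 2) * ((x - E) ^ 2 + η ^ 2) * ((y - E) ^ 2 + η ^ 2))
          ≤ 4 / (E ^ 2 + η ^ 2) *
            (((x ^ 2 + η ^ 2)⁻¹ + ((x - E) ^ 2 + η ^ 2)⁻¹) *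
              (((y ^ 2 + η ^ 2)⁻¹ + ((y - E) ^ 2 + η ^ 2)⁻¹))) := this
        _ = (4 / (E ^ 2 + η ^ 2) * g x) * g y := by rw [hgdef]; ring
    rw [MeasureTheory.integral_const_mul] at h1
    have hgx : 0 ≤ g x := hg_nonneg x
    calc (∫ y in Set.Ioo (-10:ℝ) 10, |(x + y) * (x + y - 2 * E)| /
          ((x ^ 2 + η ^ 2) * (y ^ 2 + η ^ 2) * ((x - E) ^ 2 + η ^ 2) * ((y - E) ^ 2 + η ^ 2)))
        ≤ (4 / (E ^ 2 + η ^ 2) * g x) * ∫ y in Set.Ioo (-10:ℝ) 10, g y := h1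
      _ ≤ (4 / (E ^ 2 + η ^ 2) * g x) * (2 * π / η) := by
          apply mul_le_mul_of_nonneg_left hM (by positivity)
      _ = 4 / (E ^ 2 + η ^ 2) * (2 * π / η) * g x := by ring
  -- outer bound
  have houter : (∫ x in Set.Ioo (-10:ℝ) 10, ∫ y in Set.Ioo (-10:ℝ) 10,
        |(x + y) * (x + y - 2 * E)| /
          ((x ^ 2 + η ^ 2) * (y ^ 2 + η ^ 2) * ((x - E) ^ 2 + η ^ 2) * ((y - E) ^ 2 + η ^ 2)))
      ≤ 4 / (E ^ 2 + η ^ 2) * (2 * π / η) * (2 * π / η) := by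
    have h1 : (∫ x in Set.Ioo (-10:ℝ) 10, ∫ y in Set.Ioo (-10:ℝ) 10,
          |(x + y) * (x + y - 2 * E)| /
            ((x ^ 2 + η ^ 2) * (y ^ 2 + η ^ 2) * ((x - E) ^ 2 + η ^ 2) * ((y - E) ^ 2 + η ^ 2)))
        ≤ ∫ x in Set.Ioo (-10:ℝ) 10, (4 / (E ^ 2 + η ^ 2) * (2 * π / η)) * g x := by
      refine integral_mono_of_nonneg
        (Filter.Eventually.of_forall fun x => integral_nonneg fun y => by positivity)
        (hgint.const_mul _) (Filter.Eventually.of_forall fun x => ?_)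
      have := hinner x
      calc (∫ y in Set.Ioo (-10:ℝ) 10, |(x + y) * (x + y - 2 * E)| /
            ((x ^ 2 + η ^ 2) * (y ^ 2 + η ^ 2) * ((x - E) ^ 2 + η ^ 2) * ((y - E) ^ 2 + η ^ 2)))
          ≤ 4 / (E ^ 2 + η ^ 2) * (2 * π / η) * g x := this
        _ = (4 / (E ^ 2 + η ^ 2) * (2 * π / η)) * g x := by ring
    rw [MeasureTheory.integral_const_mul] at h1
    calc (∫ x in Set.Ioo (-10:ℝ) 10, ∫ y in Set.Ioo (-10:ℝ) 10,
          |(x + y) * (x + y - 2 * E)| /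
            ((x ^ 2 + η ^ 2) * (y ^ 2 + η ^ 2) * ((x - E) ^ 2 + η ^ 2) * ((y - E) ^ 2 + η ^ 2)))
        ≤ (4 / (E ^ 2 + η ^ 2) * (2 * π / η)) * ∫ x in Set.Ioo (-10:ℝ) 10, g x := h1
      _ ≤ (4 / (E ^ 2 + η ^ 2) * (2 * π / η)) * (2 * π / η) := by
          apply mul_le_mul_of_nonneg_left hM (by positivity)
      _ = 4 / (E ^ 2 + η ^ 2) * (2 * π / η) * (2 * π / η) := by ring
  have hfinal : η ^ 2 * (4 / (E ^ 2 + η ^ 2) * (2 * π / η) * (2 * π / η)) ≤ 160 / (E ^ 2 + η ^ 2) := by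
    have hη' : η ≠ 0 := ne_of_gt hη
    have heq : η ^ 2 * (4 / (E ^ 2 + η ^ 2) * (2 * π / η) * (2 * π / η))
        = (16 * π ^ 2) / (E ^ 2 + η ^ 2) := by field_simp; ring
    rw [heq]
    gcongr
    nlinarith [Real.pi_lt_d2, Real.pi_pos]
  calc η ^ 2 * (∫ x in Set.Ioo (-10:ℝ) 10, ∫ y in Set.Ioo (-10:ℝ) 10,
        |(x + y) * (x + y - 2 * E)| /
          ((x ^ 2 + η ^ 2) * (y ^ 2 + η ^ 2) * ((x - E) ^ 2 + η ^ 2) * ((y - E) ^ 2 + η ^ 2)))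
      ≤ η ^ 2 * (4 / (E ^ 2 + η ^ 2) * (2 * π / η) * (2 * π / η)) :=
        mul_le_mul_of_nonneg_left houter (by positivity)
    _ ≤ 160 / (E ^ 2 + η ^ 2) := hfinal
end
end
end

section
/- Let X be a real random variable with E[X] = 0, E[X²] = 1 and E[X⁴] < ∞, and set s₃ = E[X³] and s₄ = E[X⁴] − 3. Then for every integer N ≥ 4 and every sequence of real numbers (c_k)_{k ≥ 1} with Σ_{k ≥ 1} k c_k² < ∞: (1/2) Σ_{k ≥ 1} k c_k² + (s₄/2) c₂² − (2 s₃/√N) c₁ c₂ ≥ 0. -/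
open MeasureTheory ProbabilityTheory Real Filter Topology

noncomputable section

open MeasureTheory ProbabilityTheory Real Filter Topology RMT

noncomputable section

theorem stmt18 (Ω : Type) [MeasurableSpace Ω] (μ : Measure Ω) [IsProbabilityMeasure μ]
    (X : Ω → ℝ) (hX : Measurable X)
    (h1 : ∫ ω, X ω ∂μ = 0) (h2 : ∫ ω, (X ω) ^ 2 ∂μ = 1)
    (h4 : Integrable (fun ω => (X ω) ^ 4) μ) :
    ∀ N : ℕ, 4 ≤ N → ∀ c : ℕ → ℝ, Summable (fun k : ℕ => (k : ℝ) * c k ^ 2) →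
      0 ≤ (1 / 2) * (∑' k : ℕ, (k : ℝ) * c k ^ 2)
          + ((∫ ω, (X ω) ^ 4 ∂μ) - 3) / 2 * c 2 ^ 2
          - 2 * (∫ ω, (X ω) ^ 3 ∂μ) / Real.sqrt N * c 1 * c 2 := by
  intro N hN c hc
  have hik : ∀ k : ℕ, k ≤ 4 → Integrable (fun ω => X ω ^ k) μ := by
    intro k hk
    have hbound : Integrable (fun ω => 1 + X ω ^ 4) μ := (integrable_const 1).add h4
    refine hbound.mono' (hX.pow_const k).aestronglyMeasurable
      (Filter.Eventually.of_forall fun ω => ?_)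
    rw [Real.norm_eq_abs, abs_pow]
    rcases le_or_gt (|X ω|) 1 with h | h
    · have h1' : |X ω| ^ k ≤ 1 := pow_le_one₀ (abs_nonneg _) h
      nlinarith [sq_nonneg (X ω ^ 2)]
    · have h1' : |X ω| ^ k ≤ |X ω| ^ 4 := pow_le_pow_right₀ h.le hk
      have h2' : |X ω| ^ 4 = X ω ^ 4 := by
        rw [← abs_pow]; exact abs_of_nonneg (by positivity)
      linarith
  have hi1 : Integrable X μ := by simpa using hik 1 (by norm_num)
  have hi2 : Integrable (fun ω => X ω ^ 2) μ := hik 2 (by norm_num)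
  have hi3 : Integrable (fun ω => X ω ^ 3) μ := hik 3 (by norm_num)
  have hlin : ∀ p q s t u : ℝ,
      ∫ ω, (p * X ω ^ 4 + q * X ω ^ 3 + s * X ω ^ 2 + t * X ω + u) ∂μ
        = p * (∫ ω, X ω ^ 4 ∂μ) + q * (∫ ω, X ω ^ 3 ∂μ) + s + u := by
    intro p q s t u
    have A1 : Integrable (fun ω => p * X ω ^ 4) μ := h4.const_mul p
    have A2 : Integrable (fun ω => q * X ω ^ 3) μ := hi3.const_mul q
    have A3 : Integrable (fun ω => s * X ω ^ 2) μ := hi2.const_mul s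
    have A4 : Integrable (fun ω => t * X ω) μ := hi1.const_mul t
    have B1 : Integrable (fun ω => p * X ω ^ 4 + q * X ω ^ 3) μ := A1.add A2
    have B2 : Integrable (fun ω => p * X ω ^ 4 + q * X ω ^ 3 + s * X ω ^ 2) μ := B1.add A3
    have B3 : Integrable (fun ω => p * X ω ^ 4 + q * X ω ^ 3 + s * X ω ^ 2 + t * X ω) μ :=
      B2.add A4
    simp only [integral_add B3 (integrable_const u), integral_add B2 A4,
      integral_add B1 A3, integral_add A1 A2,
      integral_const_mul, integral_const, probReal_univ, h1, h2, measure_univ,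
      ENNReal.toReal_one, one_smul, smul_eq_mul, one_mul, mul_zero, mul_one]
    ring
  have hNpos : (0:ℝ) < (N:ℝ) := by positivity
  set r : ℝ := 2 / Real.sqrt N with hr
  have hsq : Real.sqrt (N:ℝ) ^ 2 = (N:ℝ) := Real.sq_sqrt hNpos.le
  have hr2 : r ^ 2 = 4 / (N:ℝ) := by rw [hr, div_pow, hsq]; norm_num
  have hr2le : r ^ 2 ≤ 1 := by
    rw [hr2, div_le_one hNpos]
    exact_mod_cast hN
  have hApos : (0:ℝ) ≤ (∫ ω, X ω ^ 4 ∂μ) - 1 := by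
    have e : (fun ω => (X ω ^ 2 - 1) ^ 2)
        = fun ω => (1:ℝ) * X ω ^ 4 + 0 * X ω ^ 3 + (-2) * X ω ^ 2 + 0 * X ω + 1 := by
      funext ω; ring
    have h0 : (0:ℝ) ≤ ∫ ω, (X ω ^ 2 - 1) ^ 2 ∂μ :=
      integral_nonneg fun ω => sq_nonneg _
    rw [e, hlin] at h0
    linarith
  have hBpos : (0:ℝ) ≤ c 1 ^ 2 - 2 * r * c 1 * c 2 * (∫ ω, X ω ^ 3 ∂μ)
      + r ^ 2 * c 2 ^ 2 * ((∫ ω, X ω ^ 4 ∂μ) - 1) := by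
    have e : (fun ω => (c 1 * X ω - r * c 2 * (X ω ^ 2 - 1)) ^ 2)
        = fun ω => (r ^ 2 * c 2 ^ 2) * X ω ^ 4 + (-(2 * r * c 1 * c 2)) * X ω ^ 3
            + (c 1 ^ 2 - 2 * r ^ 2 * c 2 ^ 2) * X ω ^ 2
            + (2 * r * c 1 * c 2) * X ω + r ^ 2 * c 2 ^ 2 := by
      funext ω; ring
    have h0 : (0:ℝ) ≤ ∫ ω, (c 1 * X ω - r * c 2 * (X ω ^ 2 - 1)) ^ 2 ∂μ :=
      integral_nonneg fun ω => sq_nonneg _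
    rw [e, hlin] at h0
    linarith
  have hT : (1:ℝ) * c 1 ^ 2 + 2 * c 2 ^ 2 ≤ ∑' k : ℕ, (k : ℝ) * c k ^ 2 := by
    have h := Summable.sum_le_tsum ({1, 2} : Finset ℕ)
      (fun k _ => by positivity) hc
    simpa using h
  have hrr : 2 * (∫ ω, X ω ^ 3 ∂μ) / Real.sqrt N = (∫ ω, X ω ^ 3 ∂μ) * r := by
    rw [hr]; ring
  rw [hrr]
  have h5 : (0:ℝ) ≤ (1 - r ^ 2) * c 2 ^ 2 * ((∫ ω, X ω ^ 4 ∂μ) - 1) :=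
    mul_nonneg (mul_nonneg (by linarith) (sq_nonneg _)) hApos
  nlinarith [hT, hBpos, h5]
end
end
end
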